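/- For every ε > 0 there exists a constant C (depending only on ε) such that for all real N, K ≥ 1 and all positive integers q, | ∑_{r ≤ K} ∑_{d ≤ N, gcd(d,q) ∣ r} gcd(d,q) − KN | ≤ C·(K+N)·q^ε, where the sums run over positive integers r ≤ K and positive integers d ≤ N with gcd(d,q) dividing r. -/

import Mathlib

open Finset
open scoped Classical

/-!
Swapping the two sums, each `d ≤ N` contributes `gcd(d, q) ⌊K / gcd(d, q)⌋`, which differs from
`⌊K⌋` by less than `gcd(d, q)`. Hence the double sum is `⌊K⌋⌊N⌋ + O(∑_{d ≤ N} gcd(d, q))`, and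
`∑_{d ≤ N} gcd(d, q) ≤ ∑_{e ∣ q} e ⌊N / e⌋ ≤ τ(q) N`. The divisor bound `τ(q) ≪_ε q^ε` finishes
the proof: in `τ(q) = ∏ (e_p + 1)` every prime with `p^ε ≥ 2` has `e_p + 1 ≤ p^(e_p ε)`, and the
boundedly many remaining primes each cost at most a constant factor.
-/

/-- `tauMN M N m` = τ_{M,N}(m): the number of pairs (a,b) of positive integers
with a ≤ M, b ≤ N and a*b = m. -/
noncomputable def tauMN (M N : ℝ) (m : ℕ) : ℕ :=
  (m.divisors.filter (fun a : ℕ => (a : ℝ) ≤ M ∧ ((m / a : ℕ) : ℝ) ≤ N)).card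

/-- `tauLe N n` = τ_N(n): the number of divisors d of n with d ≤ N. -/
noncomputable def tauLe (N : ℝ) (n : ℕ) : ℕ :=
  (n.divisors.filter (fun d : ℕ => (d : ℝ) ≤ N)).card

/-- ‖t‖_q = inf over integers n of |t - q·n|. -/
noncomputable def qnorm (q : ℕ) (t : ℝ) : ℝ := ⨅ n : ℤ, |t - q * n|

/-- The pair correlation function R₂(x, N, α) for the fractional parts of n²α. -/
noncomputable def R2 (x : ℝ) (N : ℕ) (α : ℝ) : ℝ :=
  (((Finset.Icc 1 N) ×ˢ (Finset.Icc 1 N)).filter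
    (fun p => p.1 ≠ p.2 ∧ qnorm 1 ((p.1 : ℝ) ^ 2 * α - (p.2 : ℝ) ^ 2 * α) ≤ x / N)).card / N

/-- The pair correlation of the fractional parts of n²α is Poissonian. -/
def PoissonianPC (α : ℝ) : Prop :=
  ∀ x : ℝ, 0 < x → Filter.Tendsto (fun N : ℕ => R2 x N α) Filter.atTop (nhds (2 * x))

/-- α is of (Diophantine) type κ: |α − p/q| ≥ c/q^κ for some c > 0 and all p ∈ ℤ, q ∈ ℕ. -/
def IsOfType (α κ : ℝ) : Prop :=
  ∃ c : ℝ, 0 < c ∧ ∀ p : ℤ, ∀ q : ℕ, 0 < q → c / (q : ℝ) ^ κ ≤ |α - (p : ℝ) / (q : ℝ)|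

/-- The rational p/q is of type (e, 𝒦): |p/q − u/v| ≥ 1/(𝒦 v^e) for all rationals u/v ≠ p/q. -/
def RatOfType (p : ℤ) (q : ℕ) (e 𝒦 : ℝ) : Prop :=
  ∀ u : ℤ, ∀ v : ℕ, 0 < v → (u : ℝ) / (v : ℝ) ≠ (p : ℝ) / (q : ℝ) →
    1 / (𝒦 * (v : ℝ) ^ e) ≤ |(p : ℝ) / (q : ℝ) - (u : ℝ) / (v : ℝ)|

lemma Real.add_one_le_mul_rpow_pow {ε x : ℝ} (hε : 0 < ε) (hx : 2 ≤ x) (e : ℕ) :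
    (e + 1 : ℝ) ≤ (1 + (ε * Real.log 2)⁻¹) * (x ^ e) ^ ε := by
  set δ := ε * Real.log 2
  have hδ : 0 < δ := mul_pos hε (Real.log_pos one_lt_two)
  have hexp : 1 + δ * e ≤ (x ^ e) ^ ε := by
    calc 1 + δ * e ≤ Real.exp (δ * e) := by linarith [Real.add_one_le_exp (δ * e)]
      _ = (2 ^ e) ^ ε := by
        rw [← Real.rpow_pow_comm zero_le_two, ← Real.rpow_natCast, ← Real.rpow_mul zero_le_two,
          Real.rpow_def_of_pos two_pos]
        congr 1
        ring
      _ ≤ (x ^ e) ^ ε := by gcongr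
  calc (e + 1 : ℝ) ≤ (1 + δ⁻¹) * (1 + δ * e) := by
        rw [add_mul, one_mul, mul_add, mul_one, inv_mul_cancel_left₀ hδ.ne']
        nlinarith [inv_pos.mpr hδ]
    _ ≤ (1 + δ⁻¹) * (x ^ e) ^ ε := by gcongr

lemma Real.add_one_le_rpow_pow {ε x : ℝ} (hx : 0 ≤ x) (h2 : 2 ≤ x ^ ε) (e : ℕ) :
    (e + 1 : ℝ) ≤ (x ^ e) ^ ε := by
  calc (e + 1 : ℝ) ≤ 2 ^ e := by
        have := one_add_mul_le_pow (show (-2 : ℝ) ≤ 1 by norm_num) e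
        norm_num at this
        linarith
    _ ≤ (x ^ ε) ^ e := by gcongr
    _ = (x ^ e) ^ ε := Real.rpow_pow_comm hx ε e

lemma Nat.cast_rpow_eq_prod_primeFactors {q : ℕ} (hq : q ≠ 0) (ε : ℝ) :
    (q : ℝ) ^ ε = ∏ p ∈ q.primeFactors, ((p : ℝ) ^ q.factorization p) ^ ε := by
  rw [Real.finsetProd_rpow _ _ (fun p _ ↦ by positivity)]
  exact_mod_cast congrArg (fun n : ℕ ↦ (n : ℝ) ^ ε) (Nat.prod_primeFactors_pow_factorization hq)

theorem Nat.card_divisors_le_mul_rpow {ε : ℝ} (hε : 0 < ε) :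
    ∃ C : ℝ, 0 ≤ C ∧ ∀ q : ℕ, q ≠ 0 → (#q.divisors : ℝ) ≤ C * (q : ℝ) ^ ε := by
  set c : ℝ := 1 + (ε * Real.log 2)⁻¹
  have hc : 1 ≤ c := le_add_of_nonneg_right (inv_nonneg.mpr (by positivity))
  set T := ⌈(2 : ℝ) ^ ε⁻¹⌉₊
  refine ⟨c ^ (T + 1), by positivity, fun q hq ↦ ?_⟩
  have hlocal : ∀ p ∈ q.primeFactors, (q.factorization p + 1 : ℝ) ≤
      (if p ≤ T then c else 1) * ((p : ℝ) ^ q.factorization p) ^ ε := by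
    intro p hp
    have hp2 : (2 : ℝ) ≤ p := by exact_mod_cast (Nat.prime_of_mem_primeFactors hp).two_le
    split_ifs with hpT
    · exact Real.add_one_le_mul_rpow_pow hε hp2 _
    · rw [one_mul]
      refine Real.add_one_le_rpow_pow (by positivity) ?_ _
      rw [← Real.rpow_inv_le_iff_of_pos zero_le_two (by positivity) hε]
      exact (Nat.le_ceil _).trans (by exact_mod_cast (not_le.mp hpT).le)
  have hsmall : #{p ∈ q.primeFactors | p ≤ T} ≤ T + 1 :=
    (card_le_card fun p hp ↦ mem_range_succ_iff.mpr (mem_filter.mp hp).2).trans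
      (card_range _).le
  calc (#q.divisors : ℝ) = ∏ p ∈ q.primeFactors, (q.factorization p + 1 : ℝ) := by
        rw [Nat.card_divisors hq]; push_cast; rfl
    _ ≤ ∏ p ∈ q.primeFactors, (if p ≤ T then c else 1) * ((p : ℝ) ^ q.factorization p) ^ ε :=
        prod_le_prod (fun _ _ ↦ by positivity) hlocal
    _ = c ^ #{p ∈ q.primeFactors | p ≤ T} * (q : ℝ) ^ ε := by
        rw [prod_mul_distrib, prod_ite, prod_const, prod_const_one, mul_one,
          Nat.cast_rpow_eq_prod_primeFactors hq]
    _ ≤ c ^ (T + 1) * (q : ℝ) ^ ε := by gcongr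

lemma sum_Icc_sum_filter_dvd {ι M : Type*} [AddCommMonoid M] (s : Finset ι) (g : ι → ℕ)
    (f : ι → M) (K : ℕ) :
    ∑ r ∈ Icc 1 K, ∑ i ∈ s with g i ∣ r, f i = ∑ i ∈ s, (K / g i) • f i := by
  simp_rw [sum_filter]
  rw [sum_comm]
  refine sum_congr rfl fun i _ ↦ ?_
  rw [← sum_filter, sum_const, ← zero_add 1, Icc_add_one_left_eq_Ioc,
    Nat.Ioc_filter_dvd_card_eq_div]

lemma Nat.sum_Icc_gcd_le (N : ℕ) {q : ℕ} (hq : q ≠ 0) :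
    ∑ d ∈ Icc 1 N, (d.gcd q : ℝ) ≤ #q.divisors * N := by
  calc ∑ d ∈ Icc 1 N, (d.gcd q : ℝ) ≤ ∑ d ∈ Icc 1 N, ∑ e ∈ q.divisors with e ∣ d, (e : ℝ) := by
        refine sum_le_sum fun d _ ↦ single_le_sum (fun _ _ ↦ by positivity) ?_
        exact mem_filter.mpr ⟨Nat.mem_divisors.mpr ⟨d.gcd_dvd_right q, hq⟩, d.gcd_dvd_left q⟩
    _ = ∑ e ∈ q.divisors, ((N / e : ℕ) * e : ℝ) := by
        rw [sum_Icc_sum_filter_dvd]; simp only [nsmul_eq_mul]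
    _ ≤ ∑ e ∈ q.divisors, (N : ℝ) := sum_le_sum fun e _ ↦ by exact_mod_cast N.div_mul_le_self e
    _ = #q.divisors * N := by rw [sum_const, nsmul_eq_mul]

lemma Nat.sub_floor_mul_floor_le {K N : ℝ} (hK : 0 ≤ K) (hN : 0 ≤ N) :
    K * N - ⌊K⌋₊ * ⌊N⌋₊ ≤ K + N := by
  have hK' := Nat.lt_floor_add_one K
  have hN' := Nat.lt_floor_add_one N
  nlinarith [Nat.floor_le hK, Nat.floor_le hN, Nat.cast_nonneg (α := ℝ) ⌊N⌋₊]

lemma Nat.cast_sub_lt_div_mul (K : ℕ) {g : ℕ} (hg : 0 < g) :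
    (K : ℝ) - g < ((K / g : ℕ) : ℝ) * g := by
  have : (K : ℝ) < ((K / g : ℕ) : ℝ) * g + g := by exact_mod_cast Nat.lt_div_mul_add hg
  linarith

theorem abs_sum_sum_gcd_sub_mul_le {N K : ℝ} (hN : 0 ≤ N) (hK : 0 ≤ K) {q : ℕ} (hq : q ≠ 0) :
    |(∑ r ∈ Icc 1 ⌊K⌋₊, ∑ d ∈ Icc 1 ⌊N⌋₊ with d.gcd q ∣ r, (d.gcd q : ℝ)) - K * N| ≤
      #q.divisors * N + (K + N) := by
  set K' := ⌊K⌋₊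
  set N' := ⌊N⌋₊
  rw [sum_Icc_sum_filter_dvd]
  simp only [nsmul_eq_mul]
  have hupper : ∑ d ∈ Icc 1 N', ((K' / d.gcd q : ℕ) : ℝ) * d.gcd q ≤ N' * K' := by
    simpa using sum_le_sum fun d (_ : d ∈ Icc 1 N') ↦
      (by exact_mod_cast K'.div_mul_le_self (d.gcd q) : ((K' / d.gcd q : ℕ) : ℝ) * d.gcd q ≤ K')
  have hlower : N' * K' - ∑ d ∈ Icc 1 N', (d.gcd q : ℝ) ≤
      ∑ d ∈ Icc 1 N', ((K' / d.gcd q : ℕ) : ℝ) * d.gcd q := by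
    simpa [sum_sub_distrib] using sum_le_sum fun d (_ : d ∈ Icc 1 N') ↦
      (K'.cast_sub_lt_div_mul (Nat.gcd_pos_of_pos_right d (Nat.pos_of_ne_zero hq))).le
  have hgcd : ∑ d ∈ Icc 1 N', (d.gcd q : ℝ) ≤ #q.divisors * N :=
    (Nat.sum_Icc_gcd_le N' hq).trans (by gcongr; exact Nat.floor_le hN)
  have hfloor : (K' : ℝ) * N' ≤ K * N := by gcongr <;> exact Nat.floor_le ‹_›
  have hfloor' := Nat.sub_floor_mul_floor_le hK hN
  rw [abs_le]
  constructor <;> linarith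

/-- For every ε > 0 there is C (depending only on ε) such that for all real N, K ≥ 1 and
all positive integers q, |∑_{r ≤ K} ∑_{d ≤ N, (d,q)∣r} (d,q) − KN| ≤ C(K+N)q^ε. -/
theorem gcd_sum_asymptotic_one (ε : ℝ) (hε : 0 < ε) :
    ∃ C : ℝ, ∀ N K : ℝ, 1 ≤ N → 1 ≤ K → ∀ q : ℕ, 0 < q →
      |(∑ r ∈ Finset.Icc 1 ⌊K⌋₊,
          ∑ d ∈ (Finset.Icc 1 ⌊N⌋₊).filter (fun d : ℕ => Nat.gcd d q ∣ r),
            (Nat.gcd d q : ℝ)) - K * N| ≤ C * (K + N) * (q : ℝ) ^ ε := by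
  obtain ⟨C, hC, hdiv⟩ := Nat.card_divisors_le_mul_rpow hε
  refine ⟨C + 1, fun N K hN hK q hq ↦ ?_⟩
  have hqε : 1 ≤ (q : ℝ) ^ ε := Real.one_le_rpow (by exact_mod_cast hq) hε.le
  calc _ ≤ #q.divisors * N + (K + N) :=
        abs_sum_sum_gcd_sub_mul_le (by linarith) (by linarith) hq.ne'
    _ ≤ C * (q : ℝ) ^ ε * (K + N) + (K + N) * (q : ℝ) ^ ε := by
        gcongr ?_ + ?_
        · exact mul_le_mul (hdiv q hq.ne') (by linarith) (by linarith) (by positivity)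
        · exact le_mul_of_one_le_right (by linarith) hqε
    _ = (C + 1) * (K + N) * (q : ℝ) ^ ε := by ring
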